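/- Suppose the smooth Christoffel symbols Γ satisfy conditions (D1), (D2), (D3), (D5), (D6) and the three-curvature condition (3RC): Σ_s (R^s_{lmi} c^j_{ks} + R^s_{lik} c^j_{ms} + R^s_{lkm} c^j_{is}) = 0 for all ambient indices, where R^k_{ijl} := ∂_iΓ^k_{jl} − ∂_jΓ^k_{il} + Σ_s (Γ^k_{is}Γ^s_{jl} − Γ^k_{js}Γ^s_{il}) and c are the David–Hertling structure constants. Then for all α ≠ β, all k and all j ≥ 3: ∂_{j(α)} Γ^{k(α)}_{k(β)1(α)} = 0. -/

import Mathlib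

open scoped BigOperators

/-- Coordinate domain: one real coordinate `u^{i(α)}` for each block `α` and each
1-based index `i ∈ {1,…,m α}`; the element `⟨α, p⟩` corresponds to `(p+1)(α)`. -/
abbrev Dom (r : ℕ) (m : Fin r → ℕ) : Type := ((α : Fin r) × Fin (m α)) → ℝ

/-- `InR m α i`: the 1-based integer index `i` is admissible in block `α`. -/
abbrev InR {r : ℕ} (m : Fin r → ℕ) (α : Fin r) (i : ℤ) : Prop :=
  1 ≤ i ∧ i ≤ (m α : ℤ)

/-- The unit coordinate vector in the direction `j(β)` (zero if out of range). -/
def coordVec {r : ℕ} (m : Fin r → ℕ) (β : Fin r) (j : ℤ) : Dom r m :=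
  fun p => if p.1 = β ∧ ((p.2.val : ℤ) + 1 = j) then 1 else 0

/-- Partial derivative `∂_{j(β)} f` at `x`. -/
noncomputable def pd {r : ℕ} {m : Fin r → ℕ} (β : Fin r) (j : ℤ)
    (f : Dom r m → ℝ) (x : Dom r m) : ℝ :=
  fderiv ℝ f x (coordVec m β j)

/-- David–Hertling structure constants `c^{i(α)}_{j(β)k(γ)}`; out-of-range
values are interpreted as `0`. -/
def cDH {r : ℕ} (m : Fin r → ℕ) (α : Fin r) (i : ℤ) (β : Fin r) (j : ℤ)
    (γ : Fin r) (k : ℤ) : ℝ :=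
  if α = β ∧ α = γ ∧ i = j + k - 1 ∧ InR m α i ∧ InR m β j ∧ InR m γ k then 1 else 0

/-- Sum over all ambient indices `s(σ)`. -/
noncomputable def sumIdx {r : ℕ} (m : Fin r → ℕ) (f : Fin r → ℤ → ℝ) : ℝ :=
  ∑ σ : Fin r, ∑ s ∈ Finset.Icc (1 : ℤ) ((m σ : ℤ)), f σ s

/-- The components `V^{i(α)}_{j(β)} = δ_{αβ} X^{(i-j+1)(α)}` of `V = X∘`. -/
def Vcomp {r : ℕ} {m : Fin r → ℕ} (X : Fin r → ℤ → Dom r m → ℝ)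
    (α : Fin r) (i : ℤ) (β : Fin r) (j : ℤ) : Dom r m → ℝ :=
  fun x => if α = β then X α (i - j + 1) x else 0

/-- The tensor `A^{i(α)}_{j(β)k(γ)s(σ)}` measuring the failure of symmetry of `∇c`. -/
noncomputable def Atens {r : ℕ} {m : Fin r → ℕ}
    (Γ : Fin r → ℤ → Fin r → ℤ → Fin r → ℤ → Dom r m → ℝ)
    (α : Fin r) (i : ℤ) (β : Fin r) (j : ℤ) (γ : Fin r) (k : ℤ)
    (σ : Fin r) (s : ℤ) : Dom r m → ℝ :=
  fun x => sumIdx m (fun τ t =>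
    Γ α i β j τ t x * cDH m τ t γ k σ s
      - Γ τ t β j σ s x * cDH m α i γ k τ t
      - Γ α i γ k τ t x * cDH m τ t β j σ s
      + Γ τ t γ k σ s x * cDH m α i β j τ t)

/-- The curvature tensor `R^{a(α)}_{b(β)c(γ)d(δ)}` of the connection `Γ`. -/
noncomputable def Rm {r : ℕ} {m : Fin r → ℕ}
    (Γ : Fin r → ℤ → Fin r → ℤ → Fin r → ℤ → Dom r m → ℝ)
    (α : Fin r) (a : ℤ) (β : Fin r) (b : ℤ) (γ : Fin r) (c : ℤ)
    (δ : Fin r) (d : ℤ) (x : Dom r m) : ℝ :=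
  pd β b (Γ α a γ c δ d) x - pd γ c (Γ α a β b δ d) x
    + sumIdx m (fun σ s => Γ α a β b σ s x * Γ σ s γ c δ d x
        - Γ α a γ c σ s x * Γ σ s β b δ d x)

-- aux lemmas to be inserted before the theorem
section Aux
variable {r : ℕ}

lemma sumIdx_zero' (m : Fin r → ℕ) (f : Fin r → ℤ → ℝ)
    (h : ∀ σ s, 1 ≤ s → s ≤ (m σ : ℤ) → f σ s = 0) : sumIdx m f = 0 := by
  unfold sumIdx
  apply Finset.sum_eq_zero
  intro σ _
  apply Finset.sum_eq_zero
  intro s hs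
  exact h σ s (Finset.mem_Icc.mp hs).1 (Finset.mem_Icc.mp hs).2

lemma sumIdx_eval (m : Fin r → ℕ) (f : Fin r → ℤ → ℝ) (α : Fin r) (p : ℤ)
    (hp1 : 1 ≤ p) (hp2 : p ≤ (m α : ℤ))
    (h0 : ∀ σ s, 1 ≤ s → s ≤ (m σ : ℤ) → (σ ≠ α ∨ s ≠ p) → f σ s = 0) :
    sumIdx m f = f α p := by
  unfold sumIdx
  rw [Finset.sum_eq_single α
    (fun b _ hb => Finset.sum_eq_zero (fun s hs =>
      h0 b s (Finset.mem_Icc.mp hs).1 (Finset.mem_Icc.mp hs).2 (Or.inl hb)))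
    (fun h => absurd (Finset.mem_univ α) h)]
  exact Finset.sum_eq_single p
    (fun b hb hbp => h0 α b (Finset.mem_Icc.mp hb).1 (Finset.mem_Icc.mp hb).2 (Or.inr hbp))
    (fun hp => absurd (Finset.mem_Icc.mpr ⟨hp1, hp2⟩) hp)

lemma sumIdx_eval₂ (m : Fin r → ℕ) (f : Fin r → ℤ → ℝ) (α : Fin r) (p q : ℤ)
    (hp1 : 1 ≤ p) (hp2 : p ≤ (m α : ℤ)) (hq1 : 1 ≤ q) (hq2 : q ≤ (m α : ℤ)) (hpq : p ≠ q)
    (h0 : ∀ σ s, 1 ≤ s → s ≤ (m σ : ℤ) → (σ ≠ α ∨ (s ≠ p ∧ s ≠ q)) → f σ s = 0) :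
    sumIdx m f = f α p + f α q := by
  unfold sumIdx
  rw [Finset.sum_eq_single α
    (fun b _ hb => Finset.sum_eq_zero (fun s hs =>
      h0 b s (Finset.mem_Icc.mp hs).1 (Finset.mem_Icc.mp hs).2 (Or.inl hb)))
    (fun h => absurd (Finset.mem_univ α) h)]
  have hsub : ({p, q} : Finset ℤ) ⊆ Finset.Icc 1 (m α : ℤ) := by
    intro b hb
    rcases Finset.mem_insert.mp hb with h | h
    · subst h; exact Finset.mem_Icc.mpr ⟨hp1, hp2⟩
    · rw [Finset.mem_singleton.mp h]; exact Finset.mem_Icc.mpr ⟨hq1, hq2⟩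
  rw [← Finset.sum_subset hsub (fun b hb hnb => by
    have h1 := (Finset.mem_Icc.mp hb).1
    have h2 := (Finset.mem_Icc.mp hb).2
    have hbp : b ≠ p := fun h => hnb (by simp [h])
    have hbq : b ≠ q := fun h => hnb (by simp [h])
    exact h0 α b h1 h2 (Or.inr ⟨hbp, hbq⟩))]
  exact Finset.sum_pair hpq

lemma cDH_diag_one (m : Fin r → ℕ) (α : Fin r) (q c s : ℤ) (h : q = c + s - 1)
    (h1 : InR m α q) (h2 : InR m α c) (h3 : InR m α s) :
    cDH m α q α c α s = 1 := by
  unfold cDH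
  rw [if_pos ⟨rfl, rfl, h, h1, h2, h3⟩]

lemma cDH_diag_zero (m : Fin r → ℕ) {α σ : Fin r} (q c s : ℤ)
    (h : σ ≠ α ∨ q ≠ c + s - 1) : cDH m α q α c σ s = 0 := by
  unfold cDH
  rw [if_neg]
  rintro ⟨-, h2, h3, -⟩
  rcases h with h | h
  · exact h h2.symm
  · exact h h3

lemma cDH_offdiag_zero (m : Fin r → ℕ) {α β : Fin r} (h : α ≠ β) (q c : ℤ)
    (σ : Fin r) (s : ℤ) : cDH m α q β c σ s = 0 := by
  unfold cDH
  rw [if_neg]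
  rintro ⟨h1, -⟩
  exact h h1

lemma pd_congr' {m : Fin r → ℕ} {U : Set (Dom r m)} (hU : IsOpen U)
    {f g : Dom r m → ℝ} (h : ∀ y ∈ U, f y = g y) {x : Dom r m} (hx : x ∈ U)
    (β : Fin r) (jj : ℤ) : pd β jj f x = pd β jj g x := by
  unfold pd
  rw [Filter.EventuallyEq.fderiv_eq (Filter.eventuallyEq_of_mem (hU.mem_nhds hx) h)]

lemma pd_zero' {m : Fin r → ℕ} {U : Set (Dom r m)} (hU : IsOpen U)
    {f : Dom r m → ℝ} (h : ∀ y ∈ U, f y = 0) {x : Dom r m} (hx : x ∈ U)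
    (β : Fin r) (jj : ℤ) : pd β jj f x = 0 := by
  have : pd β jj f x = pd β jj (fun _ => (0:ℝ)) x := pd_congr' hU h hx β jj
  rw [this]
  unfold pd
  simp [fderiv_const]

end Aux

theorem statement18
    {r : ℕ} (hr : 1 ≤ r) (m : Fin r → ℕ) (hm : ∀ α, 1 ≤ m α)
    (U : Set (Dom r m)) (hU : IsOpen U)
    (Γ : Fin r → ℤ → Fin r → ℤ → Fin r → ℤ → Dom r m → ℝ)
    (hΓs : ∀ α i β j γ k, ContDiffOn ℝ (⊤ : ℕ∞) (Γ α i β j γ k) U)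
    (hΓ0 : ∀ α i β j γ k, ¬(InR m α i ∧ InR m β j ∧ InR m γ k) → Γ α i β j γ k = 0)
    (hΓsym : ∀ α i β j γ k, Γ α i β j γ k = Γ α i γ k β j)
    (hD1 : ∀ α i β j γ k, InR m α i → InR m β j → InR m γ k →
      α ≠ β → β ≠ γ → α ≠ γ → ∀ x ∈ U, Γ α i β j γ k x = 0)
    (hD2a : ∀ α β, α ≠ β → ∀ i j k, InR m α i → InR m β j → InR m α k → ∀ x ∈ U,
      Γ α i β j α k x = if k ≤ i then Γ α (i - k + 1) β j α 1 x else 0)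
    (hD2b : ∀ α β, α ≠ β → ∀ i j k, InR m α i → InR m β j → InR m β k → ∀ x ∈ U,
      Γ α i β j β k x = if j + k ≤ (m β : ℤ) + 1 then Γ α i β (j + k - 1) β 1 x else 0)
    (hD3 : ∀ α i β j γ k, InR m α i → InR m β j → InR m γ k →
      i < max j k → ∀ x ∈ U, Γ α i β j γ k x = 0)
    (hD5 : ∀ α i j k, InR m α i → InR m α j → InR m α k →
      i - j - k ≤ -3 → ∀ x ∈ U, Γ α i α j α k x = 0)
    (hD6 : ∀ ρ α β, α ≠ β → ∀ i j k, InR m α i → InR m ρ j → InR m β k →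
      i - j - k < -1 → ∀ x ∈ U, Γ α i ρ j β k x = 0)
    (hRC : ∀ ι i η j κ k ζ l μ mm,
      InR m ι i → InR m η j → InR m κ k → InR m ζ l → InR m μ mm → ∀ x ∈ U,
      sumIdx m (fun σ s =>
        Rm Γ σ s ζ l μ mm ι i x * cDH m η j κ k σ s
          + Rm Γ σ s ζ l ι i κ k x * cDH m η j μ mm σ s
          + Rm Γ σ s ζ l κ k μ mm x * cDH m η j ι i σ s) = 0)
    :
    ∀ α β, α ≠ β → ∀ k j, 1 ≤ k → k ≤ (m α : ℤ) → k ≤ (m β : ℤ) →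
      3 ≤ j → j ≤ (m α : ℤ) →
      ∀ x ∈ U, pd α j (Γ α k β k α 1) x = 0 := by
  intro α β hαβ k j hk1 hkα hkβ hj3 hjα x hxU
  have hNe : β ≠ α := hαβ.symm
  have iR1α : InR m α 1 := ⟨le_refl 1, by exact_mod_cast hm α⟩
  have iRkα : InR m α k := ⟨hk1, hkα⟩
  have iRkβ : InR m β k := ⟨hk1, hkβ⟩
  have iRj : InR m α j := ⟨by omega, hjα⟩
  -- local vanishing helper handling out-of-range indices
  have hz : ∀ (a : Fin r) (i : ℤ) (b : Fin r) (jj : ℤ) (c : Fin r) (kk : ℤ),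
      (InR m a i → InR m b jj → InR m c kk → Γ a i b jj c kk x = 0) →
      Γ a i b jj c kk x = 0 := by
    intro a i b jj c kk h
    by_cases h1 : InR m a i ∧ InR m b jj ∧ InR m c kk
    · exact h h1.1 h1.2.1 h1.2.2
    · rw [hΓ0 a i b jj c kk h1]; rfl
  -- vanishing products V1, V2, V3
  have V1 : ∀ σ s, 1 ≤ s → s ≤ (m σ : ℤ) →
      Γ α k α j σ s x * Γ σ s β k α 1 x = 0 := by
    intro σ s hs1 hs2
    by_cases hσα : σ = α
    · rw [hσα]
      by_cases hsk : s < k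
      · have h2 : Γ α s β k α 1 x = 0 := by
          rw [hΓsym α s β k α 1]
          exact hz α s α 1 β k (fun r1 r2 r3 =>
            hD6 α α β hαβ s 1 k r1 r2 r3 (by omega) x hxU)
        rw [h2, mul_zero]
      · have h1 : Γ α k α j α s x = 0 :=
          hz α k α j α s (fun r1 r2 r3 =>
            hD5 α k j s r1 r2 r3 (by omega) x hxU)
        rw [h1, zero_mul]
    · by_cases hσβ : σ = β
      · rw [hσβ]
        by_cases hsk : s < k
        · have h2 : Γ β s β k α 1 x = 0 :=
            hz β s β k α 1 (fun r1 r2 r3 =>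
              hD6 β β α hNe s k 1 r1 r2 r3 (by omega) x hxU)
          rw [h2, mul_zero]
        · have h1 : Γ α k α j β s x = 0 :=
            hz α k α j β s (fun r1 r2 r3 =>
              hD6 α α β hαβ k j s r1 r2 r3 (by omega) x hxU)
          rw [h1, zero_mul]
      · have h2 : Γ σ s β k α 1 x = 0 :=
          hz σ s β k α 1 (fun r1 r2 r3 =>
            hD1 σ s β k α 1 r1 r2 r3 hσβ hNe hσα x hxU)
        rw [h2, mul_zero]
  have V2 : ∀ σ s, 1 ≤ s → s ≤ (m σ : ℤ) →
      Γ α k β k σ s x * Γ σ s α j α 1 x = 0 := by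
    intro σ s hs1 hs2
    by_cases hσα : σ = α
    · rw [hσα]
      by_cases hss : 2 ≤ s
      · have h1 : Γ α k β k α s x = 0 := by
          rw [hΓsym α k β k α s]
          exact hz α k α s β k (fun r1 r2 r3 =>
            hD6 α α β hαβ k s k r1 r2 r3 (by omega) x hxU)
        rw [h1, zero_mul]
      · have hs : s = 1 := by omega
        rw [hs]
        have h2 : Γ α 1 α j α 1 x = 0 :=
          hz α 1 α j α 1 (fun r1 r2 r3 =>
            hD3 α 1 α j α 1 r1 r2 r3 (lt_max_iff.mpr (Or.inl (by omega))) x hxU)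
        rw [h2, mul_zero]
    · by_cases hσβ : σ = β
      · rw [hσβ]
        by_cases hss : 2 ≤ s
        · have h1 : Γ α k β k β s x = 0 :=
            hz α k β k β s (fun r1 r2 r3 =>
              hD6 β α β hαβ k k s r1 r2 r3 (by omega) x hxU)
          rw [h1, zero_mul]
        · have hs : s = 1 := by omega
          rw [hs]
          have h2 : Γ β 1 α j α 1 x = 0 :=
            hz β 1 α j α 1 (fun r1 r2 r3 =>
              hD6 α β α hNe 1 j 1 r1 r2 r3 (by omega) x hxU)
          rw [h2, mul_zero]
      · have h1 : Γ α k β k σ s x = 0 :=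
          hz α k β k σ s (fun r1 r2 r3 =>
            hD1 α k β k σ s r1 r2 r3 hαβ (fun h => hσβ h.symm) (fun h => hσα h.symm) x hxU)
        rw [h1, zero_mul]
  have V3 : ∀ σ s, 1 ≤ s → s ≤ (m σ : ℤ) →
      Γ α k α 1 σ s x * Γ σ s β k α j x = 0 := by
    intro σ s hs1 hs2
    by_cases hσα : σ = α
    · rw [hσα]
      by_cases hbig : s < j + k - 1
      · have h2 : Γ α s β k α j x = 0 := by
          rw [hΓsym α s β k α j]
          exact hz α s α j β k (fun r1 r2 r3 =>
            hD6 α α β hαβ s j k r1 r2 r3 (by omega) x hxU)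
        rw [h2, mul_zero]
      · have h1 : Γ α k α 1 α s x = 0 :=
          hz α k α 1 α s (fun r1 r2 r3 =>
            hD3 α k α 1 α s r1 r2 r3 (lt_max_iff.mpr (Or.inr (by omega))) x hxU)
        rw [h1, zero_mul]
    · by_cases hσβ : σ = β
      · rw [hσβ]
        by_cases hsk : s ≤ k
        · have h2 : Γ β s β k α j x = 0 :=
            hz β s β k α j (fun r1 r2 r3 =>
              hD6 β β α hNe s k j r1 r2 r3 (by omega) x hxU)
          rw [h2, mul_zero]
        · have h1 : Γ α k α 1 β s x = 0 :=
            hz α k α 1 β s (fun r1 r2 r3 =>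
              hD6 α α β hαβ k 1 s r1 r2 r3 (by omega) x hxU)
          rw [h1, zero_mul]
      · have h2 : Γ σ s β k α j x = 0 :=
          hz σ s β k α j (fun r1 r2 r3 =>
            hD1 σ s β k α j r1 r2 r3 hσβ hNe hσα x hxU)
        rw [h2, mul_zero]
  -- quadratic sums vanish
  have quadA : sumIdx m (fun σ s => Γ α k α j σ s x * Γ σ s β k α 1 x
      - Γ α k β k σ s x * Γ σ s α j α 1 x) = 0 :=
    sumIdx_zero' m _ (fun σ s h1 h2 => by
      rw [V1 σ s h1 h2, V2 σ s h1 h2, sub_zero])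
  have quadB : sumIdx m (fun σ s => Γ α k α j σ s x * Γ σ s α 1 β k x
      - Γ α k α 1 σ s x * Γ σ s α j β k x) = 0 :=
    sumIdx_zero' m _ (fun σ s h1 h2 => by
      rw [hΓsym σ s α 1 β k, hΓsym σ s α j β k, V1 σ s h1 h2, V3 σ s h1 h2, sub_zero])
  have quadC : sumIdx m (fun σ s => Γ α k β k σ s x * Γ σ s α j α 1 x
      - Γ α k α j σ s x * Γ σ s β k α 1 x) = 0 :=
    sumIdx_zero' m _ (fun σ s h1 h2 => by
      rw [V2 σ s h1 h2, V1 σ s h1 h2, sub_zero])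
  have quadD : sumIdx m (fun σ s => Γ α k β k σ s x * Γ σ s α 1 α j x
      - Γ α k α 1 σ s x * Γ σ s β k α j x) = 0 :=
    sumIdx_zero' m _ (fun σ s h1 h2 => by
      rw [hΓsym σ s α 1 α j, V2 σ s h1 h2, V3 σ s h1 h2, sub_zero])
  -- vanishing pd's
  have pdB2 : pd α 1 (Γ α k α j β k) x = 0 :=
    pd_zero' hU (fun y hy => hD6 α α β hαβ k j k iRkα iRj iRkβ (by omega) y hy) hxU α 1
  have pdD2 : pd α 1 (Γ α k β k α j) x = 0 := by
    rw [hΓsym α k β k α j]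
    exact pd_zero' hU (fun y hy => hD6 α α β hαβ k j k iRkα iRj iRkβ (by omega) y hy) hxU α 1
  -- curvature evaluations
  have hA : Rm Γ α k α j β k α 1 x
      = pd α j (Γ α k β k α 1) x - pd β k (Γ α k α j α 1) x := by
    simp only [Rm]
    rw [quadA, add_zero]
  have hB : Rm Γ α k α j α 1 β k x = pd α j (Γ α k β k α 1) x := by
    simp only [Rm]
    rw [quadB, hΓsym α k α 1 β k, pdB2, add_zero, sub_zero]
  have hC : Rm Γ α k β k α j α 1 x
      = pd β k (Γ α k α j α 1) x - pd α j (Γ α k β k α 1) x := by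
    simp only [Rm]
    rw [quadC, add_zero]
  have hDd : Rm Γ α k β k α 1 α j x = pd β k (Γ α k α j α 1) x := by
    simp only [Rm]
    rw [quadD, hΓsym α k α 1 α j, pdD2, add_zero, sub_zero]
  -- first curvature relation: (D - E) + D = 0
  have hR1 := hRC α 1 α k α 1 α j β k iR1α iRkα iR1α iRj iRkβ x hxU
  rw [sumIdx_eval m _ α k hk1 hkα ?side1] at hR1
  case side1 =>
    intro σ s hs1 hs2 hne
    have e1 : cDH m α k α 1 σ s = 0 := by
      apply cDH_diag_zero
      rcases hne with h | h
      · exact Or.inl h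
      · exact Or.inr (by omega)
    have e2 : cDH m α k β k σ s = 0 := cDH_offdiag_zero m hαβ k k σ s
    simp only [e1, e2, mul_zero, add_zero]
  simp only [cDH_diag_one m α k 1 k (by ring) iRkα iR1α iRkα,
    cDH_offdiag_zero m hαβ k k α k, mul_one, mul_zero, add_zero, zero_add] at hR1
  rw [hA, hB] at hR1
  -- second curvature relation: (E - D) + E (+ possibly Rm-G) = 0
  have hR2 := hRC α 1 α k α 1 β k α j iR1α iRkα iR1α iRkβ iRj x hxU
  by_cases hkj : j ≤ k
  · -- k ≥ j : middle term present, killed by third relation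
    have hp1 : (1:ℤ) ≤ k - j + 1 := by omega
    have iRp : InR m α (k - j + 1) := ⟨hp1, by omega⟩
    have hR3 := hRC α 1 α (k - j + 1) α 1 β k α 1 iR1α iRp iR1α iRkβ iR1α x hxU
    rw [sumIdx_eval m _ α (k - j + 1) hp1 iRp.2 ?side3] at hR3
    case side3 =>
      intro σ s hs1 hs2 hne
      have e1 : cDH m α (k - j + 1) α 1 σ s = 0 := by
        apply cDH_diag_zero
        rcases hne with h | h
        · exact Or.inl h
        · exact Or.inr (by omega)
      simp only [e1, mul_zero, add_zero]
    simp only [cDH_diag_one m α (k - j + 1) 1 (k - j + 1) (by ring) iRp iR1α iRp,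
      mul_one] at hR3
    have hG : Rm Γ α (k - j + 1) β k α 1 α 1 x = 0 := by linarith
    rw [sumIdx_eval₂ m _ α (k - j + 1) k hp1 iRp.2 hk1 hkα (by omega) ?side2] at hR2
    case side2 =>
      intro σ s hs1 hs2 hne
      have e1 : cDH m α k α 1 σ s = 0 := by
        apply cDH_diag_zero
        rcases hne with h | h
        · exact Or.inl h
        · exact Or.inr (by omega)
      have e2 : cDH m α k α j σ s = 0 := by
        apply cDH_diag_zero
        rcases hne with h | h
        · exact Or.inl h
        · exact Or.inr (by omega)
      simp only [e1, e2, mul_zero, add_zero]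
    have z1 : cDH m α k α 1 α (k - j + 1) = 0 :=
      cDH_diag_zero m k 1 (k - j + 1) (Or.inr (by omega))
    have z2 : cDH m α k α j α k = 0 :=
      cDH_diag_zero m k j k (Or.inr (by omega))
    simp only [z1, z2, cDH_diag_one m α k 1 k (by ring) iRkα iR1α iRkα,
      cDH_diag_one m α k j (k - j + 1) (by omega) iRkα iRj iRp,
      mul_one, mul_zero, add_zero, zero_add] at hR2
    rw [hG, hC, hDd] at hR2
    linarith
  · -- k < j : middle term absent
    rw [sumIdx_eval m _ α k hk1 hkα ?side2'] at hR2
    case side2' =>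
      intro σ s hs1 hs2 hne
      have e1 : cDH m α k α 1 σ s = 0 := by
        apply cDH_diag_zero
        rcases hne with h | h
        · exact Or.inl h
        · exact Or.inr (by omega)
      have e2 : cDH m α k α j σ s = 0 :=
        cDH_diag_zero m k j s (Or.inr (by omega))
      simp only [e1, e2, mul_zero, add_zero]
    have z2 : cDH m α k α j α k = 0 :=
      cDH_diag_zero m k j k (Or.inr (by omega))
    simp only [z2, cDH_diag_one m α k 1 k (by ring) iRkα iR1α iRkα,
      mul_one, mul_zero, add_zero, zero_add] at hR2
    rw [hC, hDd] at hR2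
    linarith
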